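/- Let E be a real symmetric positive definite N×N matrix, A a real N×N matrix with −(A + A^T) positive semidefinite, and V a real N×n matrix with linearly independent columns. Set Ê = V^T E V and = V^T A V. If x̂ : ℝ → ℝ^n is differentiable and satisfies Ê x̂′(t) = x̂(t) for all t, then the reduced energy t ↦ x̂(t)^T Ê x̂(t) is non-increasing in t. That is, the Galerkin-projected reduced-order model is again energy-dissipating. -/

import Mathlib

/-!
For symmetric `M`, the energy `xᵀ M x` has derivative `2 xᵀ M x'`; along `M x' = B x` this is
`2 xᵀ B x = xᵀ (B + Bᵀ) x ≤ 0` whenever `-(B + Bᵀ)` is positive semidefinite. Galerkin projection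
preserves both hypotheses: `Vᵀ E V` is symmetric, and `-(Â + Âᵀ) = Vᵀ (-(A + Aᵀ)) V` is again
positive semidefinite.
-/

open Matrix

variable {ι : Type*} [Fintype ι]

theorem HasDerivAt.dotProduct {f g : ℝ → ι → ℝ} {f' g' : ι → ℝ} {t : ℝ}
    (hf : HasDerivAt f f' t) (hg : HasDerivAt g g' t) :
    HasDerivAt (fun s => f s ⬝ᵥ g s) (f' ⬝ᵥ g t + f t ⬝ᵥ g') t := by
  have := HasDerivAt.fun_sum (u := Finset.univ) fun i _ =>
    (hasDerivAt_pi.mp hf i).fun_mul (hasDerivAt_pi.mp hg i)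
  simpa only [_root_.dotProduct, Finset.sum_add_distrib] using this

theorem HasDerivAt.mulVec {κ : Type*} [Fintype κ] (M : Matrix κ ι ℝ) {f : ℝ → ι → ℝ}
    {f' : ι → ℝ} {t : ℝ} (hf : HasDerivAt f f' t) : HasDerivAt (fun s => M *ᵥ f s) (M *ᵥ f') t :=
  M.mulVecLin.toContinuousLinearMap.hasFDerivAt.comp_hasDerivAt t hf

theorem HasDerivAt.dotProduct_mulVec_self {M : Matrix ι ι ℝ} (hM : M.IsSymm)
    {f : ℝ → ι → ℝ} {f' : ι → ℝ} {t : ℝ} (hf : HasDerivAt f f' t) :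
    HasDerivAt (fun s => f s ⬝ᵥ M *ᵥ f s) (2 * (f t ⬝ᵥ M *ᵥ f')) t := by
  convert hf.dotProduct (hf.mulVec M) using 1
  rw [two_mul, ← dotProduct_transpose_mulVec, hM.eq]

theorem Matrix.dotProduct_mulVec_self_nonpos_of_posSemidef_neg_add_transpose
    {A : Matrix ι ι ℝ} (hA : (-(A + Aᵀ)).PosSemidef) (x : ι → ℝ) : x ⬝ᵥ A *ᵥ x ≤ 0 := by
  have h := hA.dotProduct_mulVec_nonneg x
  simp only [neg_mulVec, add_mulVec, dotProduct_neg, dotProduct_add, star_trivial,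
    dotProduct_transpose_mulVec] at h
  linarith

theorem Matrix.PosSemidef.neg_add_transpose_transpose_mul_mul {κ : Type*} [Fintype κ]
    {A : Matrix ι ι ℝ} (hA : (-(A + Aᵀ)).PosSemidef) (V : Matrix ι κ ℝ) :
    (-(Vᵀ * A * V + (Vᵀ * A * V)ᵀ)).PosSemidef := by
  convert hA.conjTranspose_mul_mul_same V using 1
  simp only [conjTranspose_eq_transpose_of_trivial, transpose_mul, transpose_transpose,
    Matrix.mul_neg, Matrix.neg_mul, Matrix.mul_add, Matrix.add_mul, Matrix.mul_assoc]

theorem antitone_dotProduct_mulVec_self_of_mulVec_deriv_eq {M B : Matrix ι ι ℝ} (hM : M.IsSymm)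
    (hB : (-(B + Bᵀ)).PosSemidef) {x : ℝ → ι → ℝ} (hx : Differentiable ℝ x)
    (hode : ∀ t, M *ᵥ deriv x t = B *ᵥ x t) :
    Antitone (fun t => x t ⬝ᵥ M *ᵥ x t) := by
  have hderiv t := (hx t).hasDerivAt.dotProduct_mulVec_self hM
  refine antitone_of_deriv_nonpos (fun t => (hderiv t).differentiableAt) fun t => ?_
  rw [(hderiv t).deriv, hode t]
  have := Matrix.dotProduct_mulVec_self_nonpos_of_posSemidef_neg_add_transpose hB (x t)
  linarith

theorem reduced_descriptor_system_energy_dissipating_general {N n : ℕ}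
    (E A : Matrix (Fin N) (Fin N) ℝ)
    (hE : E.PosDef) (hA : (-(A + Aᵀ)).PosSemidef)
    (V : Matrix (Fin N) (Fin n) ℝ)
    (xhat : ℝ → (Fin n → ℝ)) (hx : Differentiable ℝ xhat)
    (hode : ∀ t : ℝ,
      (Vᵀ * E * V).mulVec (deriv xhat t) = (Vᵀ * A * V).mulVec (xhat t)) :
    Antitone (fun t : ℝ => xhat t ⬝ᵥ (Vᵀ * E * V).mulVec (xhat t)) := by
  have hEhat : (Vᵀ * E * V).IsSymm := by
    simpa only [isHermitian_iff_isSymm, conjTranspose_eq_transpose_of_trivial] using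
      isHermitian_conjTranspose_mul_mul V hE.isHermitian
  exact antitone_dotProduct_mulVec_self_of_mulVec_deriv_eq hEhat
    (hA.neg_add_transpose_transpose_mul_mul V) hx hode

/-- The Galerkin-projected reduced-order model Ê x̂′ = Â x̂ with
Ê = Vᵀ E V and Â = Vᵀ A V is again energy-dissipating: the reduced energy
t ↦ x̂(t)ᵀ Ê x̂(t) is non-increasing. -/
theorem reduced_descriptor_system_energy_dissipating {N n : ℕ}
    (E A : Matrix (Fin N) (Fin N) ℝ)
    (hE : E.PosDef) (hA : (-(A + Aᵀ)).PosSemidef)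
    (V : Matrix (Fin N) (Fin n) ℝ) (hV : Function.Injective V.mulVec)
    (xhat : ℝ → (Fin n → ℝ)) (hx : Differentiable ℝ xhat)
    (hode : ∀ t : ℝ,
      (Vᵀ * E * V).mulVec (deriv xhat t) = (Vᵀ * A * V).mulVec (xhat t)) :
    Antitone (fun t : ℝ => xhat t ⬝ᵥ (Vᵀ * E * V).mulVec (xhat t)) :=
  reduced_descriptor_system_energy_dissipating_general E A hE hA V xhat hx hode
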